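/- Let M be a loopless matroid with ground set E and lattice of flats L, and let L̂ = L \ {∅, E}. Then ∑_{F ∈ L̂} (#F)·χ̄_{M/F}(q) = (#E)·[rk M − 1]_q. -/

import Mathlib

open Polynomial

namespace MatroidZeta

open scoped Classical

variable {α : Type*}

/-- The `q`-analogue `[n]_q = 1 + q + ⋯ + q^(n-1)` of a natural number `n`, in `ℤ[q]`. -/
noncomputable def qAnalogue (n : ℕ) : Polynomial ℤ := ∑ i ∈ Finset.range n, X ^ i

/-- The rank of a set `X` in a matroid `M`: the largest size of an independent subset of `X`. -/
noncomputable def rk (M : Matroid α) (X : Set α) : ℕ :=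
  sSup {n | ∃ I, M.Indep I ∧ I ⊆ X ∧ I.ncard = n}

/-- Contraction `M / C` of a matroid, defined as the dual of the deletion of `C`
from the dual matroid. -/
noncomputable def contract (M : Matroid α) (C : Set α) : Matroid α :=
  ((M✶.restrict (M✶.E \ C))✶)

/-- A matroid is loopless if no element of the ground set lies in the closure of `∅`. -/
def Loopless (M : Matroid α) : Prop := M.closure ∅ = ∅

/-- The characteristic polynomial `χ_M(q) = ∑_{S ⊆ E} (-1)^{#S} q^(rk M - rk S)`. -/
noncomputable def charPoly (M : Matroid α) : Polynomial ℤ :=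
  ∑ᶠ S ∈ {S : Set α | S ⊆ M.E}, (-1 : ℤ) ^ S.ncard • (X : Polynomial ℤ) ^ (rk M M.E - rk M S)

/-- The reduced characteristic polynomial
`χ̄_M(q) = χ_M(q)/(q-1) = ∑_{S ⊆ E} (-1)^{#S} [rk M - rk S]_q`. -/
noncomputable def redCharPoly (M : Matroid α) : Polynomial ℤ :=
  ∑ᶠ S ∈ {S : Set α | S ⊆ M.E}, (-1 : ℤ) ^ S.ncard • qAnalogue (rk M M.E - rk M S)

/-- `wt_M(w) = max_{B basis of M} ∑_{e ∈ B} w e`. -/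
noncomputable def wt (M : Matroid α) (w : α → ℝ) : ℝ :=
  sSup {x | ∃ B, M.IsBase B ∧ x = ∑ᶠ e ∈ B, w e}

/-- The initial matroid `M_w`: the matroid on the ground set of `M` whose bases are the
bases of `M` of maximal `w`-weight.  (Such a matroid exists and is unique.) -/
noncomputable def initialMatroid (M : Matroid α) (w : α → ℝ) : Matroid α :=
  if h : ∃ N : Matroid α, N.E = M.E ∧
      ∀ B, N.IsBase B ↔ M.IsBase B ∧ ∑ᶠ e ∈ B, w e = wt M w
  then h.choose else M

/-- A flag of non-minimal flats of `M`: a chain of flats strictly above `cl(∅)`. -/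
def IsFlag (M : Matroid α) (C : Finset (Set α)) : Prop :=
  (∀ F ∈ C, M.IsFlat F ∧ M.closure ∅ ⊂ F) ∧ IsChain (· ⊆ ·) (C : Set (Set α))

/-- `N(M)`: the set of flags of non-minimal flats of `M`. -/
def flags (M : Matroid α) : Set (Finset (Set α)) := {C | IsFlag M C}

/-- `N°(M)`: flags not containing the ground set. -/
def flagsCirc (M : Matroid α) : Set (Finset (Set α)) := {C | IsFlag M C ∧ M.E ∉ C}

/-- `N*(M)`: flags containing the ground set. -/
def flagsStar (M : Matroid α) : Set (Finset (Set α)) := {C | IsFlag M C ∧ M.E ∈ C}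

/-- `z_C(F)`: the largest member of the chain `C` strictly below `F` (or `∅` if none). -/
def zmin (C : Finset (Set α)) (F : Set α) : Set α := ⋃₀ {G | G ∈ C ∧ G ⊂ F}

/-- The weight vector `∑_{F ∈ C} v_F`, a point in the relative interior of the cone `σ_C`. -/
noncomputable def flagWeight (C : Finset (Set α)) : α → ℝ :=
  fun e => ∑ F ∈ C, if e ∈ F then (1 : ℝ) else 0

/-- The initial matroid `M_C` of a flag `C`. -/
noncomputable def flagMatroid (M : Matroid α) (C : Finset (Set α)) : Matroid α :=
  initialMatroid M (flagWeight C)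

/-!
Write `r = rk E`. Multiplying by `q - 1` turns `χ̄` into `χ`, and `#F • χ_{M/F}` is
`∑_{e ∈ F} χ_{M/F}`; after swapping the sums it suffices that, for each `e ∈ E`, the flats
`F ∋ e` other than `E` contribute `q^(r-1) - 1`. These are the flats above the rank-one flat
`cl{e}`, and for any `G`, `∑_{F ⊇ G flat} χ_{M/F}(q) = q^(r - rk G)`: writing
`χ_{M/T}(q) = ∑_{T ⊆ U ⊆ E} (-1)^|U \ T| q^(r - rk U)` for every `T`, the sum over all `T ⊇ G`
collapses to `q^(r - rk G)` by Möbius inversion on the Boolean lattice, and a non-flat `T`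
contributes nothing because `M / T` has a loop. Finally the flat `E` itself contributes
`χ_{M/E} = 1`.
-/

open Finset
open scoped Matroid

section Rank

variable {M : Matroid α} [M.RankFinite] {A C I : Set α} {e : α}

lemma rk_eq_toNat_eRk (A : Set α) : rk M A = (M.eRk A).toNat := by
  refine IsGreatest.csSup_eq ⟨?_, ?_⟩
  · obtain ⟨I, hI⟩ := M.exists_isBasis' A
    exact ⟨I, hI.indep, hI.subset, by rw [hI.eRk_eq_encard, Set.ncard_def]⟩
  · rintro _ ⟨J, hJ, hJA, rfl⟩
    exact ENat.toNat_le_toNat (hJ.encard_le_eRk_of_subset hJA)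
      (Matroid.eRk_ne_top_iff.2 (M.isRkFinite_set A))

lemma rk_eq_ncard_of_isBasis' (hI : M.IsBasis' I A) : rk M A = I.ncard := by
  rw [rk_eq_toNat_eRk, hI.eRk_eq_encard, Set.ncard_def]

lemma rk_mono {A B : Set α} (h : A ⊆ B) : rk M A ≤ rk M B := by
  simp only [rk_eq_toNat_eRk]
  exact ENat.toNat_le_toNat (M.eRk_mono h) (Matroid.eRk_ne_top_iff.2 (M.isRkFinite_set B))

lemma rk_closure (A : Set α) : rk M (M.closure A) = rk M A := by
  simp only [rk_eq_toNat_eRk, Matroid.eRk_closure_eq]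

lemma rk_insert_of_mem_closure (he : e ∈ M.closure A) : rk M (insert e A) = rk M A := by
  rw [← rk_closure, Matroid.closure_insert_eq_of_mem_closure he, rk_closure]

lemma rk_closure_singleton (he : M.IsNonloop e) : rk M (M.closure {e}) = 1 := by
  rw [rk_closure, rk_eq_toNat_eRk, he.eRk_eq, ENat.toNat_one]

lemma rk_contract (hAC : Disjoint A C) : rk (M ／ C) A = rk M (A ∪ C) - rk M C := by
  obtain ⟨J, hJ⟩ := M.exists_isBasis' C
  obtain ⟨K, hK, hJK⟩ :=
    hJ.indep.subset_isBasis'_of_subset (hJ.subset.trans (Set.subset_union_right (s := A)))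
  have hKC : K ∩ C = J := (hJ.eq_of_subset_indep (hK.indep.inter_right C)
    (Set.subset_inter hJK hJ.subset) Set.inter_subset_right).symm
  have hKA : (M ／ C).IsBasis' (K \ C) A := by
    simpa [Set.union_sdiff_right, hAC.sdiff_eq_left] using
      hK.contract_isBasis' hJ (hK.indep.subset (Set.union_subset Set.sdiff_subset hJK))
  rw [rk_eq_ncard_of_isBasis' hKA, rk_eq_ncard_of_isBasis' hK, rk_eq_ncard_of_isBasis' hJ, ← hKC,
    ← Set.ncard_sdiff Set.inter_subset_left (hK.indep.finite.subset Set.inter_subset_left),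
    Set.sdiff_self_inter]

end Rank

lemma X_sub_one_mul_qAnalogue (n : ℕ) : (X - 1) * qAnalogue n = X ^ n - 1 := by
  rw [qAnalogue, mul_comm, geom_sum_mul]

lemma finsum_mem_eq_sum_powerset_filter {β : Type*} [AddCommMonoid β] (E : Finset α)
    {𝒜 : Set (Set α)} [DecidablePred fun T : Finset α ↦ (T : Set α) ∈ 𝒜] (h𝒜 : ∀ A ∈ 𝒜, A ⊆ ↑E)
    (f : Set α → β) :
    ∑ᶠ A ∈ 𝒜, f A = ∑ T ∈ E.powerset with ↑T ∈ 𝒜, f ↑T := by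
  have h𝒜_eq : 𝒜 = (fun T : Finset α ↦ (T : Set α)) '' ↑(E.powerset.filter (↑· ∈ 𝒜)) := by
    ext A
    refine ⟨fun hA ↦ ?_, ?_⟩
    · obtain ⟨T, rfl⟩ := (E.finite_toSet.subset (h𝒜 A hA)).exists_finset_coe
      exact ⟨T, by simpa using ⟨h𝒜 _ hA, hA⟩, rfl⟩
    · rintro ⟨T, hT, rfl⟩
      exact (mem_filter.1 hT).2
  conv_lhs => rw [h𝒜_eq]
  rw [finsum_mem_image Finset.coe_injective.injOn, finsum_mem_coe_finset]

lemma sum_card_smul_eq_sum_sum_filter_mem {β : Type*} [AddCommMonoid β] {E : Finset α}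
    {𝒯 : Finset (Finset α)} (h𝒯 : ∀ T ∈ 𝒯, T ⊆ E) (g : Finset α → β) :
    ∑ T ∈ 𝒯, #T • g T = ∑ e ∈ E, ∑ T ∈ 𝒯 with e ∈ T, g T := by
  simp_rw [sum_filter]
  rw [sum_comm]
  refine sum_congr rfl fun T hT ↦ ?_
  rw [← sum_filter, filter_mem_eq_inter, inter_eq_right.2 (h𝒯 T hT), sum_const]

section BooleanLattice

variable {β : Type*} [AddCommGroup β]

lemma sum_Icc_eq_sum_powerset_sdiff {G U : Finset α} (h : G ⊆ U) (f : Finset α → β) :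
    ∑ T ∈ Icc G U, f T = ∑ S ∈ (U \ G).powerset, f (G ∪ S) := by
  have hcancel (S) (hS : S ∈ ((U \ G).powerset : Set (Finset α))) : (G ∪ S) \ G = S :=
    union_sdiff_cancel_left (disjoint_sdiff.mono_right (mem_powerset.1 hS))
  rw [Icc_eq_image_powerset h, sum_image fun S₁ hS₁ S₂ hS₂ hS ↦ by
    rw [← hcancel S₁ hS₁, ← hcancel S₂ hS₂, hS]]

lemma sum_Icc_neg_one_pow_card_sdiff {G U : Finset α} (h : G ⊆ U) :
    ∑ T ∈ Icc G U, (-1 : ℤ) ^ #(U \ T) = if G = U then 1 else 0 := by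
  have hreindex :
      ∑ T ∈ Icc G U, (-1 : ℤ) ^ #(U \ T) = ∑ S ∈ (U \ G).powerset, (-1 : ℤ) ^ #S := by
    refine sum_nbij' (U \ ·) (U \ ·) (fun T hT ↦ ?_) (fun S hS ↦ ?_) (fun T hT ↦ ?_)
      (fun S hS ↦ ?_) fun _ _ ↦ rfl <;>
      simp only [mem_Icc, mem_powerset] at *
    · exact sdiff_subset_sdiff subset_rfl hT.1
    · exact ⟨subset_sdiff.2 ⟨h, disjoint_sdiff.mono_right hS⟩, sdiff_subset⟩
    · exact Finset.sdiff_sdiff_eq_self hT.2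
    · exact Finset.sdiff_sdiff_eq_self (hS.trans sdiff_subset)
  rw [hreindex, sum_powerset_neg_one_pow_card]
  exact if_congr ⟨fun hUG ↦ h.antisymm (sdiff_eq_empty_iff_subset.1 hUG),
    fun hGU ↦ by rw [hGU, Finset.sdiff_self]⟩ rfl rfl

lemma sum_Icc_sum_Icc_neg_one_pow_smul {G E : Finset α} (hG : G ⊆ E) (f : Finset α → β) :
    ∑ T ∈ Icc G E, ∑ U ∈ Icc T E, (-1 : ℤ) ^ #(U \ T) • f U = f G := by
  rw [sum_comm' (t' := Icc G E) (s' := fun U ↦ Icc G U) fun T U ↦ by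
    simp only [mem_Icc]
    exact ⟨fun h ↦ ⟨⟨h.1.1, h.2.1⟩, h.1.1.trans h.2.1, h.2.2⟩,
      fun h ↦ ⟨⟨h.1.1, h.1.2.trans h.2.2⟩, h.1.2, h.2.2⟩⟩]
  simp_rw [← sum_smul]
  rw [sum_congr rfl fun U hU ↦ by rw [sum_Icc_neg_one_pow_card_sdiff (mem_Icc.1 hU).1]]
  simp [ite_smul, hG]

end BooleanLattice

section CharPoly

lemma contract_eq_matroid_contract (M : Matroid α) (C : Set α) : contract M C = M ／ C := rfl

variable {N M : Matroid α} {E T G : Finset α} {e : α}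

lemma charPoly_eq_sum_powerset (hE : N.E = ↑E) :
    charPoly N = ∑ S ∈ E.powerset, (-1 : ℤ) ^ #S • X ^ (rk N N.E - rk N ↑S) := by
  rw [charPoly, finsum_mem_eq_sum_powerset_filter E (by simp [hE]),
    filter_true_of_mem fun S hS ↦ by simpa [hE] using hS]
  simp only [Set.ncard_coe_finset]

lemma redCharPoly_eq_sum_powerset (hE : N.E = ↑E) :
    redCharPoly N = ∑ S ∈ E.powerset, (-1 : ℤ) ^ #S • qAnalogue (rk N N.E - rk N ↑S) := by
  rw [redCharPoly, finsum_mem_eq_sum_powerset_filter E (by simp [hE]),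
    filter_true_of_mem fun S hS ↦ by simpa [hE] using hS]
  simp only [Set.ncard_coe_finset]

lemma X_sub_one_mul_redCharPoly (hE : N.E = ↑E) (hne : E.Nonempty) :
    (X - 1) * redCharPoly N = charPoly N := by
  simp_rw [redCharPoly_eq_sum_powerset hE, charPoly_eq_sum_powerset hE, mul_sum, mul_smul_comm,
    X_sub_one_mul_qAnalogue, smul_sub, sum_sub_distrib, ← sum_smul,
    sum_powerset_neg_one_pow_card_of_nonempty hne, zero_smul, sub_zero]

lemma charPoly_eq_zero_of_isLoop [N.RankFinite] (hE : N.E = ↑E) (he : N.IsLoop e) :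
    charPoly N = 0 := by
  have heE : e ∈ E := by rw [← mem_coe, ← hE]; exact he.mem_ground
  rw [charPoly_eq_sum_powerset hE, ← insert_erase heE, sum_powerset_insert (notMem_erase e E),
    ← sum_add_distrib]
  refine sum_eq_zero fun S hS ↦ ?_
  have heS : e ∉ S := fun h ↦ notMem_erase e E (mem_powerset.1 hS h)
  rw [card_insert_of_notMem heS, coe_insert, rk_insert_of_mem_closure (he.mem_closure _), pow_succ,
    mul_neg_one, neg_smul, add_neg_cancel]

lemma contract_ground_eq_coe_sdiff (hE : M.E = ↑E) (T : Finset α) :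
    (M ／ ↑T).E = ↑(E \ T) := by
  rw [Matroid.contract_ground, hE, coe_sdiff]

lemma charPoly_contract_eq_sum_Icc [M.RankFinite] (hE : M.E = ↑E) (hT : T ⊆ E) :
    charPoly (M ／ ↑T) = ∑ U ∈ Icc T E, (-1 : ℤ) ^ #(U \ T) • X ^ (rk M M.E - rk M ↑U) := by
  have hTE : (T : Set α) ⊆ M.E := hE ▸ coe_subset.2 hT
  rw [charPoly_eq_sum_powerset (contract_ground_eq_coe_sdiff hE T),
    sum_Icc_eq_sum_powerset_sdiff hT]
  refine sum_congr rfl fun S hS ↦ ?_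
  have hST : Disjoint S T := sdiff_disjoint.mono_left (mem_powerset.1 hS)
  have hT_le : rk M ↑T ≤ rk M (↑S ∪ ↑T) := rk_mono Set.subset_union_right
  have hST_le : rk M (↑S ∪ ↑T) ≤ rk M M.E :=
    rk_mono (Set.union_subset (hE ▸ coe_subset.2 ((mem_powerset.1 hS).trans sdiff_subset)) hTE)
  rw [union_sdiff_cancel_left hST.symm, Matroid.contract_ground, rk_contract (disjoint_coe.2 hST),
    rk_contract Set.disjoint_sdiff_left, Set.sdiff_union_of_subset hTE, coe_union,
    Set.union_comm (T : Set α)]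
  congr 2
  omega

lemma charPoly_contract_eq_zero_of_not_isFlat [M.RankFinite] (hE : M.E = ↑E) (hT : T ⊆ E)
    (hflat : ¬ M.IsFlat ↑T) : charPoly (M ／ ↑T) = 0 := by
  obtain ⟨x, hx, hxT⟩ : ∃ x ∈ M.closure ↑T, x ∉ (T : Set α) := by
    by_contra! h
    exact hflat (Matroid.isFlat_iff_closure_eq.2
      (Set.Subset.antisymm h (M.subset_closure _ (hE ▸ coe_subset.2 hT))))
  exact charPoly_eq_zero_of_isLoop (contract_ground_eq_coe_sdiff hE T)
    (Matroid.contract_isLoop_iff_mem_closure.2 ⟨hx, hxT⟩)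

-- `(T : Finset α)` fixes the type of the binder; with a bare `↑T`, `T` would elaborate as a set.
lemma sum_isFlat_charPoly_contract [M.RankFinite] (hE : M.E = ↑E) (hG : G ⊆ E) :
    ∑ T ∈ Icc G E with M.IsFlat (T : Finset α), charPoly (M ／ ↑T) = X ^ (rk M M.E - rk M ↑G) := by
  rw [sum_filter_of_ne fun T hT h ↦ not_not.1 fun hflat ↦
    h (charPoly_contract_eq_zero_of_not_isFlat hE (mem_Icc.1 hT).2 hflat)]
  rw [sum_congr rfl fun T hT ↦ charPoly_contract_eq_sum_Icc hE (mem_Icc.1 hT).2]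
  exact sum_Icc_sum_Icc_neg_one_pow_smul hG _

end CharPoly

lemma sum_proper_flats_mem_charPoly_contract {M : Matroid α} [M.RankFinite] {E : Finset α} {e : α}
    (hE : M.E = ↑E) (he : M.IsNonloop e) :
    ∑ T ∈ E.powerset with (M.IsFlat (T : Finset α) ∧ (T : Set α) ≠ ∅ ∧ (T : Set α) ≠ M.E) ∧ e ∈ T,
      charPoly (M ／ ↑T) = X ^ (rk M M.E - 1) - 1 := by
  obtain ⟨G, hG⟩ :=
    ((hE ▸ E.finite_toSet).subset (M.closure_subset_ground {e})).exists_finset_coe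
  have hGE : G ⊆ E := coe_subset.1 (hG ▸ hE ▸ M.closure_subset_ground {e})
  have hG_sub_iff {T : Finset α} (hT : M.IsFlat (T : Finset α)) : G ⊆ T ↔ e ∈ T := by
    rw [← coe_subset, hG]
    exact ⟨fun h ↦ h (M.mem_closure_self e he.mem_ground), fun h ↦
      (M.closure_subset_closure (Set.singleton_subset_iff.2 h)).trans hT.closure.subset⟩
  have hfilter : {T ∈ E.powerset |
      (M.IsFlat (T : Finset α) ∧ (T : Set α) ≠ ∅ ∧ (T : Set α) ≠ M.E) ∧ e ∈ T} =
      ({T ∈ Icc G E | M.IsFlat (T : Finset α)}).erase E := by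
    ext T
    simp only [mem_filter, mem_powerset, mem_erase, mem_Icc, hE, Ne, Finset.coe_inj]
    refine ⟨fun ⟨hTE, ⟨hT, _, hTne⟩, heT⟩ ↦ ⟨hTne, ⟨(hG_sub_iff hT).2 heT, hTE⟩, hT⟩,
      fun ⟨hTne, ⟨hGT, hTE⟩, hT⟩ ↦ ⟨hTE, ⟨hT, ?_, hTne⟩, (hG_sub_iff hT).1 hGT⟩⟩
    exact Set.nonempty_iff_ne_empty.1 ⟨e, (hG_sub_iff hT).1 hGT⟩
  have hE_mem : E ∈ {T ∈ Icc G E | M.IsFlat (T : Finset α)} :=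
    mem_filter.2 ⟨mem_Icc.2 ⟨hGE, subset_rfl⟩, hE ▸ M.ground_isFlat⟩
  rw [hfilter, sum_erase_eq_sub hE_mem, sum_isFlat_charPoly_contract hE hGE, hG,
    rk_closure_singleton he, charPoly_contract_eq_sum_Icc hE subset_rfl, Icc_self, sum_singleton,
    Finset.sdiff_self, card_empty, pow_zero, one_smul, ← hE, Nat.sub_self, pow_zero]

lemma sum_card_smul_charPoly_contract {M : Matroid α} [M.RankFinite] [M.Loopless] {E : Finset α}
    (hE : M.E = ↑E) :
    ∑ T ∈ E.powerset with M.IsFlat (T : Finset α) ∧ (T : Set α) ≠ ∅ ∧ (T : Set α) ≠ M.E,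
      #T • charPoly (M ／ ↑T) = #E • (X ^ (rk M M.E - 1) - 1) := by
  rw [sum_card_smul_eq_sum_sum_filter_mem fun T hT ↦ mem_powerset.1 (mem_filter.1 hT).1,
    ← sum_const]
  refine sum_congr rfl fun e he ↦ ?_
  rw [filter_filter]
  exact sum_proper_flats_mem_charPoly_contract hE (M.isNonloop_of_loopless (hE ▸ mem_coe.2 he))

theorem sum_ncard_smul_redCharPoly_contract (M : Matroid α) (hE : M.E.Finite)
    (hM : Loopless M) :
    ∑ᶠ F ∈ {F : Set α | M.IsFlat F ∧ F ≠ ∅ ∧ F ≠ M.E},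
        F.ncard • redCharPoly (contract M F)
      = M.E.ncard • qAnalogue (rk M M.E - 1) := by
  obtain ⟨E, hME⟩ := hE.exists_finset_coe
  have : M.Finite := ⟨hE⟩
  have : M.Loopless := ⟨hM⟩
  simp only [contract_eq_matroid_contract]
  rw [finsum_mem_eq_sum_powerset_filter E fun F hF ↦ hME ▸ hF.1.subset_ground]
  refine mul_left_cancel₀ (by simpa using X_sub_C_ne_zero (1 : ℤ)) ?_
  have hcard : M.E.ncard = #E := by rw [← hME, Set.ncard_coe_finset]
  rw [mul_smul_comm, X_sub_one_mul_qAnalogue, hcard, ← sum_card_smul_charPoly_contract hME.symm,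
    mul_sum]
  refine sum_congr rfl fun T hT ↦ ?_
  obtain ⟨hTE, -, -, hTne⟩ := mem_filter.1 hT
  have hproper : (E \ T).Nonempty := sdiff_nonempty.2 fun hET ↦
    hTne (by rw [← hME, (mem_powerset.1 hTE).antisymm hET])
  rw [Set.ncard_coe_finset, mul_smul_comm,
    X_sub_one_mul_redCharPoly (contract_ground_eq_coe_sdiff hME.symm T) hproper]

end MatroidZeta
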